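/- arXiv:2506.04662 — 4 statements merged into one kernel-verified Lean document; each statement's English description precedes it below -/
import Mathlib

section
/- Let F = x³ + y³ + z³ + t·x·y·z with t ∈ ℂ. The projective plane curve F = 0 has a singular point (a point where all three first partial derivatives vanish simultaneously, not all coordinates zero) if and only if t³ + 27 = 0. -/
/-- The projective curve `x³+y³+z³+t·xyz = 0` has a singular point (a nonzero
`(a,b,c) ∈ ℂ³` where all three partial derivatives of `F` vanish) iff `t³+27 = 0`. -/
theorem hesse_singular_iff (t : ℂ) :
    (∃ a b c : ℂ, ¬(a = 0 ∧ b = 0 ∧ c = 0) ∧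
      3 * a ^ 2 + t * b * c = 0 ∧
      3 * b ^ 2 + t * a * c = 0 ∧
      3 * c ^ 2 + t * a * b = 0) ↔ t ^ 3 + 27 = 0 := by
  constructor
  · rintro ⟨a, b, c, hne, h1, h2, h3⟩
    have ha : a ≠ 0 := by
      rintro rfl
      have hb : b = 0 := by
        have : (3 : ℂ) * b ^ 2 = 0 := by linear_combination h2
        have := mul_eq_zero.1 this
        simpa [pow_eq_zero_iff] using this.resolve_left (by norm_num)
      have hc : c = 0 := by
        have : (3 : ℂ) * c ^ 2 = 0 := by linear_combination h3
        have := mul_eq_zero.1 this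
        simpa [pow_eq_zero_iff] using this.resolve_left (by norm_num)
      exact hne ⟨rfl, hb, hc⟩
    have hb : b ≠ 0 := by
      rintro rfl
      have hc : c = 0 := by
        have : (3 : ℂ) * c ^ 2 = 0 := by linear_combination h3
        have := mul_eq_zero.1 this
        simpa [pow_eq_zero_iff] using this.resolve_left (by norm_num)
      have haz : a = 0 := by
        have : (3 : ℂ) * a ^ 2 = 0 := by linear_combination h1
        have := mul_eq_zero.1 this
        simpa [pow_eq_zero_iff] using this.resolve_left (by norm_num)
      exact hne ⟨haz, rfl, hc⟩
    have hc : c ≠ 0 := by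
      rintro rfl
      have haz : a = 0 := by
        have : (3 : ℂ) * a ^ 2 = 0 := by linear_combination h1
        have := mul_eq_zero.1 this
        simpa [pow_eq_zero_iff] using this.resolve_left (by norm_num)
      have hbz : b = 0 := by
        have : (3 : ℂ) * b ^ 2 = 0 := by linear_combination h2
        have := mul_eq_zero.1 this
        simpa [pow_eq_zero_iff] using this.resolve_left (by norm_num)
      exact hne ⟨haz, hbz, rfl⟩
    have key : (t ^ 3 + 27) * (a * b * c) ^ 2 = 0 := by
      linear_combination (9 * b ^ 2 * c ^ 2) * h1 + (-3 * t * b * c ^ 3) * h2 +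
        (t ^ 2 * a * b * c ^ 2) * h3
    have habc : (a * b * c) ^ 2 ≠ 0 := pow_ne_zero _ (mul_ne_zero (mul_ne_zero ha hb) hc)
    exact (mul_eq_zero.1 key).resolve_right habc
  · intro ht
    have htne : t ≠ 0 := by
      rintro rfl
      norm_num at ht
    refine ⟨1, 1, -3 / t, by simp, by field_simp; ring, by field_simp; ring, ?_⟩
    field_simp
    linear_combination ht
end

section
/- Let F = x³ + y³ + z³ + t·x·y·z, let M = [M₁₁, M₂₂, M₃₃, M₃₂, M₃₁, M₂₁] be the vector of the indicated 2×2 cofactor-type minors of the Hessian matrix of F, and let V_H = [∂²H/∂x², ∂²H/∂y², ∂²H/∂z², 2∂²H/∂y∂z, 2∂²H/∂x∂z, 2∂²H/∂x∂y] where H = (216+2t³)xyz − 6t²(x³+y³+z³). Then the scalar product M ∘ V_H equals 12t(t³ − 216)·(x³ + y³ + z³ + t·x·y·z), i.e. it is divisible by F and hence vanishes at every point of the curve F = 0. -/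
open MvPolynomial

/-- The Hesse pencil cubic `F = x³ + y³ + z³ + t·x·y·z`. -/
noncomputable def hesseF (t : ℂ) : MvPolynomial (Fin 3) ℂ :=
  X 0 ^ 3 + X 1 ^ 3 + X 2 ^ 3 + C t * X 0 * X 1 * X 2

/-- The Hessian matrix of the Hesse cubic (entries `∂²F/∂u∂v`). -/
noncomputable def hesseHM (t : ℂ) : Matrix (Fin 3) (Fin 3) (MvPolynomial (Fin 3) ℂ) :=
  Matrix.of fun i j => pderiv i (pderiv j (hesseF t))

/-- The vector `M = [M₁₁, M₂₂, M₃₃, M₃₂, M₃₁, M₂₁]` of 2×2 cofactor-type minors of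
the Hessian matrix (`Mᵢⱼ` is the cofactor obtained by deleting row `i`, column `j`). -/
noncomputable def hesseM (t : ℂ) : Fin 6 → MvPolynomial (Fin 3) ℂ :=
  ![hesseHM t 1 1 * hesseHM t 2 2 - hesseHM t 1 2 * hesseHM t 2 1,
    hesseHM t 0 0 * hesseHM t 2 2 - hesseHM t 0 2 * hesseHM t 2 0,
    hesseHM t 0 0 * hesseHM t 1 1 - hesseHM t 0 1 * hesseHM t 1 0,
    -(hesseHM t 0 0 * hesseHM t 1 2 - hesseHM t 0 2 * hesseHM t 1 0),
    hesseHM t 0 1 * hesseHM t 1 2 - hesseHM t 0 2 * hesseHM t 1 1,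
    -(hesseHM t 0 1 * hesseHM t 2 2 - hesseHM t 0 2 * hesseHM t 2 1)]

/-- The Hessian `H = (216+2t³)xyz − 6t²(x³+y³+z³)` of the Hesse cubic. -/
noncomputable def hesseH (t : ℂ) : MvPolynomial (Fin 3) ℂ :=
  C (216 + 2 * t ^ 3) * (X 0 * X 1 * X 2)
    - C (6 * t ^ 2) * (X 0 ^ 3 + X 1 ^ 3 + X 2 ^ 3)

/-- The vector `V_H = [Hₓₓ, H_yy, H_zz, 2H_yz, 2H_xz, 2H_xy]`. -/
noncomputable def hesseVH (t : ℂ) : Fin 6 → MvPolynomial (Fin 3) ℂ :=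
  ![pderiv 0 (pderiv 0 (hesseH t)), pderiv 1 (pderiv 1 (hesseH t)),
    pderiv 2 (pderiv 2 (hesseH t)), 2 * pderiv 1 (pderiv 2 (hesseH t)),
    2 * pderiv 0 (pderiv 2 (hesseH t)), 2 * pderiv 0 (pderiv 1 (hesseH t))]


lemma cons_val_five' {α : Type*} {m : ℕ} (x : α) (u : Fin (m+5) → α) :
    Matrix.vecCons x u 5
      = Matrix.vecHead (Matrix.vecTail (Matrix.vecTail (Matrix.vecTail (Matrix.vecTail u)))) :=
  rfl

lemma pdOfNat (i : Fin 3) (n : ℕ) [n.AtLeastTwo] :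
    (pderiv i) (no_index (OfNat.ofNat n) : MvPolynomial (Fin 3) ℂ) = 0 := by
  rw [← map_ofNat (C : ℂ →+* MvPolynomial (Fin 3) ℂ) n, pderiv_C]

lemma pd_hesseF (t : ℂ) (i j : Fin 3) : pderiv i (pderiv j (hesseF t)) =
    Matrix.of ![![6 * X 0, C t * X 2, C t * X 1],
      ![C t * X 2, 6 * X 1, C t * X 0],
      ![C t * X 1, C t * X 0, 6 * X 2]] i j := by
  fin_cases i <;> fin_cases j <;> simp [hesseF, pderiv_X, Pi.single_apply, pdOfNat, map_ofNat] <;> ring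

lemma HM_eq (t : ℂ) (i j : Fin 3) : hesseHM t i j =
    Matrix.of ![![6 * X 0, C t * X 2, C t * X 1],
      ![C t * X 2, 6 * X 1, C t * X 0],
      ![C t * X 1, C t * X 0, 6 * X 2]] i j := by
  rw [hesseHM]; exact pd_hesseF t i j

lemma hC1 (t : ℂ) : (C (216 + 2*t^3) : MvPolynomial (Fin 3) ℂ) = 216 + 2 * C t ^ 3 := by
  simp only [map_add, map_mul, map_pow, map_ofNat]

lemma hC2 (t : ℂ) : (C (6*t^2) : MvPolynomial (Fin 3) ℂ) = 6 * C t ^ 2 := by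
  simp only [map_mul, map_pow, map_ofNat]

lemma pd_hesseH (t : ℂ) (i j : Fin 3) : pderiv i (pderiv j (hesseH t)) =
    Matrix.of ![![(-36) * C t^2 * X 0, (216 + 2*C t^3) * X 2, (216 + 2*C t^3) * X 1],
      ![(216 + 2*C t^3) * X 2, (-36) * C t^2 * X 1, (216 + 2*C t^3) * X 0],
      ![(216 + 2*C t^3) * X 1, (216 + 2*C t^3) * X 0, (-36) * C t^2 * X 2]] i j := by
  fin_cases i <;> fin_cases j <;>
    (simp [hesseH, pderiv_X, Pi.single_apply, pdOfNat, map_ofNat]; try ring)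

/-- The scalar product `M ∘ V_H` equals `12t(t³−216)·F`; in particular it is divisible
by `F`, hence vanishes at every point of the curve `F = 0`. -/
theorem hesse_M_dot_VH (t : ℂ) :
    (∑ k : Fin 6, hesseM t k * hesseVH t k)
      = C (12 * t * (t ^ 3 - 216)) * hesseF t := by
  simp only [Fin.sum_univ_six, hesseM, hesseVH, HM_eq, pd_hesseH, hesseF,
    Matrix.cons_val_zero, Matrix.cons_val_one, Matrix.head_cons, Matrix.cons_val_two,
    Matrix.tail_cons, Matrix.of_apply, Matrix.head_fin_const, Matrix.cons_val_three,
    Matrix.cons_val_four, cons_val_five']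
  simp only [map_mul, map_add, map_sub, map_pow, map_neg, map_ofNat, C_1]
  ring
end

section
/- Let F = x³+y³+z³+t·x·y·z with t³+27 ≠ 0, and let Ψ̃ = 192(27+t³)²(12(x³y³+x³z³+y³z³) − t²x²y²z²). Then the Jacobian determinant Jac(F, xyz, Ψ̃) is equal to a nonzero constant multiple (depending only on t) of (x³−y³)(x³−z³)(y³−z³) modulo the ideal generated by F. -/
open MvPolynomial

/-- The reduced bordered-Hessian polynomial
`Ψ̃ = 192(27+t³)²(12(x³y³+x³z³+y³z³) − t²x²y²z²)`. -/
noncomputable def hessePsiTilde (t : ℂ) : MvPolynomial (Fin 3) ℂ :=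
  C (192 * (27 + t ^ 3) ^ 2) *
    (C 12 * (X 0 ^ 3 * X 1 ^ 3 + X 0 ^ 3 * X 2 ^ 3 + X 1 ^ 3 * X 2 ^ 3)
      - C (t ^ 2) * (X 0 ^ 2 * X 1 ^ 2 * X 2 ^ 2))

/-- The Jacobian determinant `Jac(f,g,h)` (rows are the gradients). -/
noncomputable def jac3 (f g h : MvPolynomial (Fin 3) ℂ) : MvPolynomial (Fin 3) ℂ :=
  (Matrix.of
    ![![pderiv 0 f, pderiv 1 f, pderiv 2 f],
      ![pderiv 0 g, pderiv 1 g, pderiv 2 g],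
      ![pderiv 0 h, pderiv 1 h, pderiv 2 h]]).det

/-- For `t³+27 ≠ 0`, `Jac(F, xyz, Ψ̃)` is a nonzero constant (depending only on `t`)
multiple of `(x³−y³)(x³−z³)(y³−z³)` modulo the ideal `(F)`. -/
theorem hesse_jac_second_hessian (t : ℂ) (ht : t ^ 3 + 27 ≠ 0) :
    ∃ c : ℂ, c ≠ 0 ∧
      jac3 (hesseF t) (X 0 * X 1 * X 2) (hessePsiTilde t)
          - C c * ((X 0 ^ 3 - X 1 ^ 3) * (X 0 ^ 3 - X 2 ^ 3) * (X 1 ^ 3 - X 2 ^ 3))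
        ∈ Ideal.span {hesseF t} := by
  refine ⟨-20736 * (27 + t ^ 3) ^ 2, ?_, ?_⟩
  · have : (27 : ℂ) + t ^ 3 ≠ 0 := by rwa [add_comm] at ht
    simp [this]
  · have h0 : jac3 (hesseF t) (X 0 * X 1 * X 2) (hessePsiTilde t)
        - C (-20736 * (27 + t ^ 3) ^ 2) *
          ((X 0 ^ 3 - X 1 ^ 3) * (X 0 ^ 3 - X 2 ^ 3) * (X 1 ^ 3 - X 2 ^ 3)) = 0 := by
      simp only [jac3, hesseF, hessePsiTilde, Matrix.det_fin_three, Matrix.of_apply,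
        Matrix.cons_val', Matrix.cons_val_zero, Matrix.cons_val_one, Matrix.head_cons,
        Matrix.empty_val', Matrix.cons_val_fin_one, Matrix.head_fin_const]
      simp only [map_add, map_sub, map_mul, map_pow, pderiv_X, pderiv_C, Pi.single_apply]
      norm_num [Fin.ext_iff]
      push_cast [map_mul, map_pow, map_ofNat]
      ring
    rw [h0]
    exact Ideal.zero_mem _
end

section
/- Let t ∈ ℂ with t³ + 27 ≠ 0 and t(t³−216)(t⁶−1404t³−58320) generic (all roots of z³+tz+2 distinct and nonzero). The set of sextactic points of the Hesse cubic F = x³+y³+z³+txyz = 0, defined as the common zeros of F and (x³−y³)(x³−z³)(y³−z³) with xyz ≠ 0, consists of exactly 27 points in ℙ²(ℂ). -/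
open MvPolynomial

/-- The second Hessian `(x³−y³)(x³−z³)(y³−z³)` of the Hesse cubic. -/
noncomputable def hesseG : MvPolynomial (Fin 3) ℂ :=
  (X 0 ^ 3 - X 1 ^ 3) * (X 0 ^ 3 - X 2 ^ 3) * (X 1 ^ 3 - X 2 ^ 3)

/-- The set of sextactic points of the Hesse cubic in `ℙ²(ℂ)`: common zeros of `F`
and `(x³−y³)(x³−z³)(y³−z³)` with `xyz ≠ 0`. -/
def hesseSextactic (t : ℂ) : Set (Projectivization ℂ (Fin 3 → ℂ)) :=
  {P | eval P.rep (hesseF t) = 0 ∧ eval P.rep hesseG = 0 ∧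
        P.rep 0 * P.rep 1 * P.rep 2 ≠ 0}

/-!
As `xyz ≠ 0`, every sextactic point lies in the chart `z = 1`, where it is a point `(a, b)` with
`a, b ≠ 0` on `a³ + b³ + 1 + tab = 0` satisfying `a³ = 1`, `b³ = 1` or `a³ = b³`. On the curve at
most one of these holds: `a³ = b³ = 1` forces `tab = -3`, hence `t³ = -27`. Each of the three
branches is in bijection with `μ₃ × {c | c³ + tc + 2 = 0}`, via `(ζ, c) ↦ (ζ, ζ²c)`,
`(ζ, c) ↦ (ζ²c, ζ)` and `(ζ, c) ↦ (ζ/c, ζ²/c)` respectively, so there are `3 · 3 · 3` points.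
-/

open MvPolynomial

section AffineCount

variable {K : Type*} [Field K] (t : K)

def affineSextactic : Set (K × K) :=
  {p | p.1 ^ 3 + p.2 ^ 3 + 1 + t * p.1 * p.2 = 0 ∧
    (p.1 ^ 3 - p.2 ^ 3) * (p.1 ^ 3 - 1) * (p.2 ^ 3 - 1) = 0 ∧ p.1 ≠ 0 ∧ p.2 ≠ 0}

def trinomialRoots : Set K := {c | c ^ 3 + t * c + 2 = 0}

variable {t}

lemma pow_three_ne_one_of_pow_three_eq_one (ht : t ^ 3 + 27 ≠ 0) {a b : K}
    (hF : a ^ 3 + b ^ 3 + 1 + t * a * b = 0) (ha : a ^ 3 = 1) : b ^ 3 ≠ 1 := by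
  intro hb
  have htab : t * a * b = -3 := by linear_combination hF - ha - hb
  exact ht (by linear_combination ((t * a * b) ^ 2 - 3 * (t * a * b) + 9) * htab
    - t ^ 3 * b ^ 3 * ha - t ^ 3 * hb)

lemma affineSextactic_eq_union :
    affineSextactic t = (affineSextactic t ∩ {p | p.1 ^ 3 = 1}) ∪
      (affineSextactic t ∩ {p | p.2 ^ 3 = 1}) ∪ (affineSextactic t ∩ {p | p.1 ^ 3 = p.2 ^ 3}) := by
  ext p
  simp only [affineSextactic, Set.mem_union, Set.mem_inter_iff, Set.mem_ofPred_eq, mul_eq_zero,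
    sub_eq_zero]
  tauto

lemma disjoint_affineSextactic_branches (ht : t ^ 3 + 27 ≠ 0) :
    Disjoint (affineSextactic t ∩ {p | p.1 ^ 3 = 1}) (affineSextactic t ∩ {p | p.2 ^ 3 = 1}) ∧
    Disjoint (affineSextactic t ∩ {p | p.1 ^ 3 = 1} ∪ affineSextactic t ∩ {p | p.2 ^ 3 = 1})
      (affineSextactic t ∩ {p | p.1 ^ 3 = p.2 ^ 3}) := by
  have key := fun {a b : K} (hF : a ^ 3 + b ^ 3 + 1 + t * a * b = 0) ↦
    pow_three_ne_one_of_pow_three_eq_one ht hF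
  refine ⟨Set.disjoint_left.2 ?_, Set.disjoint_left.2 ?_⟩
  · rintro ⟨a, b⟩ ⟨⟨hF, -⟩, ha : a ^ 3 = 1⟩ ⟨-, hb : b ^ 3 = 1⟩
    exact key hF ha hb
  · rintro ⟨a, b⟩ (⟨⟨hF, -⟩, ha : a ^ 3 = 1⟩ | ⟨⟨hF, -⟩, hb : b ^ 3 = 1⟩) ⟨-, hab : a ^ 3 = b ^ 3⟩
    · exact key hF ha (hab ▸ ha)
    · exact key hF (hab ▸ hb) hb

variable [NeZero (2 : K)]

lemma ne_zero_of_mem_trinomialRoots {c : K} (hc : c ∈ trinomialRoots t) : c ≠ 0 := by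
  rintro rfl
  have h : (0 : K) ^ 3 + t * 0 + 2 = 0 := hc
  exact two_ne_zero (by simpa using h : (2 : K) = 0)

lemma bijOn_affineSextactic_fst_pow_three_eq_one :
    Set.BijOn (fun q : K × K ↦ (q.1, q.1 ^ 2 * q.2)) ({ζ : K | ζ ^ 3 = 1} ×ˢ trinomialRoots t)
      (affineSextactic t ∩ {p | p.1 ^ 3 = 1}) := by
  refine Set.InvOn.bijOn (f' := fun p ↦ (p.1, p.1 * p.2)) ⟨?_, ?_⟩ ?_ ?_
  · rintro ⟨ζ, c⟩ ⟨hζ : ζ ^ 3 = 1, -⟩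
    ext <;> dsimp only
    linear_combination c * hζ
  · rintro ⟨a, b⟩ ⟨-, ha : a ^ 3 = 1⟩
    ext <;> dsimp only
    linear_combination b * ha
  · rintro ⟨ζ, c⟩ ⟨hζ : ζ ^ 3 = 1, hc : c ^ 3 + t * c + 2 = 0⟩
    have hζ0 : ζ ≠ 0 := by rintro rfl; simp at hζ
    refine ⟨⟨?_, ?_, hζ0, mul_ne_zero (pow_ne_zero 2 hζ0) (ne_zero_of_mem_trinomialRoots hc)⟩, hζ⟩
    · linear_combination hc + (1 + t * c + c ^ 3 * (ζ ^ 3 + 1)) * hζ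
    · linear_combination ((ζ ^ 3 - (ζ ^ 2 * c) ^ 3) * ((ζ ^ 2 * c) ^ 3 - 1)) * hζ
  · rintro ⟨a, b⟩ ⟨⟨hF, -⟩, ha : a ^ 3 = 1⟩
    refine ⟨ha, ?_⟩
    show (a * b) ^ 3 + t * (a * b) + 2 = 0
    linear_combination hF + (b ^ 3 - 1) * ha

lemma bijOn_affineSextactic_snd_pow_three_eq_one :
    Set.BijOn (fun q : K × K ↦ (q.1 ^ 2 * q.2, q.1)) ({ζ : K | ζ ^ 3 = 1} ×ˢ trinomialRoots t)
      (affineSextactic t ∩ {p | p.2 ^ 3 = 1}) := by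
  refine Set.InvOn.bijOn (f' := fun p ↦ (p.2, p.1 * p.2)) ⟨?_, ?_⟩ ?_ ?_
  · rintro ⟨ζ, c⟩ ⟨hζ : ζ ^ 3 = 1, -⟩
    ext <;> dsimp only
    linear_combination c * hζ
  · rintro ⟨a, b⟩ ⟨-, hb : b ^ 3 = 1⟩
    ext <;> dsimp only
    linear_combination a * hb
  · rintro ⟨ζ, c⟩ ⟨hζ : ζ ^ 3 = 1, hc : c ^ 3 + t * c + 2 = 0⟩
    have hζ0 : ζ ≠ 0 := by rintro rfl; simp at hζ
    refine ⟨⟨?_, ?_, mul_ne_zero (pow_ne_zero 2 hζ0) (ne_zero_of_mem_trinomialRoots hc), hζ0⟩, hζ⟩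
    · linear_combination hc + (1 + t * c + c ^ 3 * (ζ ^ 3 + 1)) * hζ
    · linear_combination ((ζ ^ 2 * c) ^ 3 - ζ ^ 3) * ((ζ ^ 2 * c) ^ 3 - 1) * hζ
  · rintro ⟨a, b⟩ ⟨⟨hF, -⟩, hb : b ^ 3 = 1⟩
    refine ⟨hb, ?_⟩
    show (a * b) ^ 3 + t * (a * b) + 2 = 0
    linear_combination hF + (a ^ 3 - 1) * hb

lemma bijOn_affineSextactic_fst_pow_three_eq_snd_pow_three :
    Set.BijOn (fun q : K × K ↦ (q.1 / q.2, q.1 ^ 2 / q.2))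
      ({ζ : K | ζ ^ 3 = 1} ×ˢ trinomialRoots t) (affineSextactic t ∩ {p | p.1 ^ 3 = p.2 ^ 3}) := by
  refine Set.InvOn.bijOn (f' := fun p ↦ (p.2 / p.1, p.2 / p.1 ^ 2)) ⟨?_, ?_⟩ ?_ ?_
  · rintro ⟨ζ, c⟩ ⟨hζ : ζ ^ 3 = 1, hc⟩
    have hζ0 : ζ ≠ 0 := by rintro rfl; simp at hζ
    have hc0 := ne_zero_of_mem_trinomialRoots hc
    ext <;> dsimp only <;> field_simp
  · rintro ⟨a, b⟩ ⟨⟨-, -, ha, hb⟩, -⟩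
    ext <;> dsimp only <;> field_simp
  · rintro ⟨ζ, c⟩ ⟨hζ : ζ ^ 3 = 1, hc : c ^ 3 + t * c + 2 = 0⟩
    have hζ0 : ζ ≠ 0 := by rintro rfl; simp at hζ
    have hc0 := ne_zero_of_mem_trinomialRoots hc
    have hab : (ζ / c) ^ 3 = (ζ ^ 2 / c) ^ 3 := by
      field_simp
      linear_combination -hζ
    refine ⟨⟨?_, by rw [hab, sub_self, zero_mul, zero_mul], div_ne_zero hζ0 hc0,
      div_ne_zero (pow_ne_zero 2 hζ0) hc0⟩, hab⟩
    field_simp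
    linear_combination hc + (ζ ^ 3 + 2 + t * c) * hζ
  · rintro ⟨a, b⟩ ⟨⟨hF, -, ha, -⟩, hab : a ^ 3 = b ^ 3⟩
    refine ⟨show (b / a) ^ 3 = 1 by rw [div_pow, ← hab, div_self (pow_ne_zero 3 ha)], ?_⟩
    show (b / a ^ 2) ^ 3 + t * (b / a ^ 2) + 2 = 0
    field_simp
    linear_combination a ^ 3 * hF + (a ^ 3 - 1) * hab

lemma encard_affineSextactic (ht : t ^ 3 + 27 ≠ 0) :
    (affineSextactic t).encard = 3 * ({ζ : K | ζ ^ 3 = 1}.encard * (trinomialRoots t).encard) := by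
  have encard_eq {f : K × K → K × K} {s : Set (K × K)}
      (hf : Set.BijOn f ({ζ : K | ζ ^ 3 = 1} ×ˢ trinomialRoots t) s) :
      s.encard = {ζ : K | ζ ^ 3 = 1}.encard * (trinomialRoots t).encard := by
    rw [← hf.image_eq, hf.injOn.encard_image, Set.encard_prod]
  obtain ⟨h01, h012⟩ := disjoint_affineSextactic_branches ht
  rw [affineSextactic_eq_union, Set.encard_union_eq h012, Set.encard_union_eq h01,
    encard_eq bijOn_affineSextactic_fst_pow_three_eq_one,
    encard_eq bijOn_affineSextactic_snd_pow_three_eq_one,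
    encard_eq bijOn_affineSextactic_fst_pow_three_eq_snd_pow_three]
  ring

end AffineCount

lemma encard_setOf_pow_three_eq_one : {ζ : ℂ | ζ ^ 3 = 1}.encard = 3 := by
  have h : {ζ : ℂ | ζ ^ 3 = 1} = ↑(Polynomial.nthRootsFinset 3 (1 : ℂ)) := by
    ext ζ
    simp
  rw [h, Set.encard_coe_eq_coe_finsetCard,
    (Complex.isPrimitiveRoot_exp 3 three_ne_zero).card_nthRootsFinset]
  rfl

section Chart

variable {K : Type*} [Field K]

noncomputable def chartPoint (p : K × K) : Projectivization K (Fin 3 → K) :=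
  Projectivization.mk K ![p.1, p.2, 1] fun h ↦ by simpa using congrFun h 2

lemma chartPoint_injective : Function.Injective (chartPoint (K := K)) := by
  rintro ⟨a, b⟩ ⟨a', b'⟩ h
  obtain ⟨c, hc⟩ := (Projectivization.mk_eq_mk_iff _ _ _ _ _).1 h
  have hc1 : (c : K) = 1 := by simpa [Units.smul_def] using congrFun hc 2
  have h0 : a' = a := by simpa [Units.smul_def, hc1] using congrFun hc 0
  have h1 : b' = b := by simpa [Units.smul_def, hc1] using congrFun hc 1
  rw [h0, h1]

lemma chartPoint_rep_div {P : Projectivization K (Fin 3 → K)} (h : P.rep 2 ≠ 0) :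
    chartPoint (P.rep 0 / P.rep 2, P.rep 1 / P.rep 2) = P := by
  conv_rhs => rw [← P.mk_rep]
  refine (Projectivization.mk_eq_mk_iff _ _ _ _ _).2 ⟨(Units.mk0 (P.rep 2) h)⁻¹, ?_⟩
  funext i
  fin_cases i <;> simp [Units.smul_def] <;> field_simp

end Chart

lemma eval_smul_hesseF (t c : ℂ) (v : Fin 3 → ℂ) :
    eval (c • v) (hesseF t) = c ^ 3 * eval v (hesseF t) := by
  simp only [hesseF, map_add, map_mul, map_pow, eval_X, eval_C, Pi.smul_apply, smul_eq_mul]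
  ring

lemma eval_smul_hesseG (c : ℂ) (v : Fin 3 → ℂ) :
    eval (c • v) hesseG = c ^ 9 * eval v hesseG := by
  simp only [hesseG, map_sub, map_mul, map_pow, eval_X, Pi.smul_apply, smul_eq_mul]
  ring

lemma mk_mem_hesseSextactic_iff (t : ℂ) {v : Fin 3 → ℂ} (hv : v ≠ 0) :
    Projectivization.mk ℂ v hv ∈ hesseSextactic t ↔
      eval v (hesseF t) = 0 ∧ eval v hesseG = 0 ∧ v 0 * v 1 * v 2 ≠ 0 := by
  obtain ⟨c, hc⟩ := Projectivization.exists_smul_eq_mk_rep ℂ v hv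
  simp [hesseSextactic, ← hc, Units.smul_def, eval_smul_hesseF, eval_smul_hesseG]

lemma chartPoint_mem_hesseSextactic_iff (t : ℂ) (p : ℂ × ℂ) :
    chartPoint p ∈ hesseSextactic t ↔ p ∈ affineSextactic t := by
  simp [chartPoint, mk_mem_hesseSextactic_iff, affineSextactic, hesseF, hesseG]

lemma hesseSextactic_eq_image (t : ℂ) :
    hesseSextactic t = chartPoint '' affineSextactic t := by
  ext P
  constructor
  · intro hP
    have h2 : P.rep 2 ≠ 0 := right_ne_zero_of_mul hP.2.2
    refine ⟨_, ?_, chartPoint_rep_div h2⟩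
    rwa [← chartPoint_mem_hesseSextactic_iff, chartPoint_rep_div h2]
  · rintro ⟨p, hp, rfl⟩
    exact (chartPoint_mem_hesseSextactic_iff t p).2 hp

/-- For generic `t` (with `t³+27 ≠ 0` and all roots of `z³+tz+2` distinct and
nonzero), the Hesse cubic has exactly `27` sextactic points. -/
theorem hesse_27_sextactic_points (t : ℂ) (ht : t ^ 3 + 27 ≠ 0)
    (hgen : ∃ z₁ z₂ z₃ : ℂ, z₁ ≠ z₂ ∧ z₁ ≠ z₃ ∧ z₂ ≠ z₃ ∧
      z₁ ≠ 0 ∧ z₂ ≠ 0 ∧ z₃ ≠ 0 ∧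
      ∀ w : ℂ, w ^ 3 + t * w + 2 = 0 ↔ (w = z₁ ∨ w = z₂ ∨ w = z₃)) :
    (hesseSextactic t).ncard = 27 := by
  obtain ⟨z₁, z₂, z₃, h12, h13, h23, -, -, -, hroots⟩ := hgen
  have hR : (trinomialRoots t).encard = 3 :=
    Set.encard_eq_three.2 ⟨z₁, z₂, z₃, h12, h13, h23, Set.ext hroots⟩
  rw [Set.ncard_def, hesseSextactic_eq_image, chartPoint_injective.injOn.encard_image,
    encard_affineSextactic ht, encard_setOf_pow_three_eq_one, hR]
  rfl
end
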